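/- arXiv:1510.03724 — 2 statements merged into one kernel-verified Lean document; each statement's English description precedes it below -/
import Mathlib

section
/- Let u: ℝ³ → ℝ be smooth with coordinates (x,y,z), and suppose u satisfies everywhere the sine-Gordon equation u_xy = sin u and the modified KdV equation u_z = u_xxx + (1/2)u_x³. Then u also satisfies everywhere the remaining multi-time Euler–Lagrange equations of the sine-Gordon pluri-Lagrangian two-form: u_xz = (3/2)u_x²·u_xx + u_xxxx, u_yz = (1/2)u_x²·sin u + u_xx·cos u, and u_xxy = u_x·cos u. -/
noncomputable section

/-- The partial derivative of `f : ℝ^N → ℝ` in the `i`-th coordinate direction. -/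
def pd {N : ℕ} (i : Fin N) (f : (Fin N → ℝ) → ℝ) : (Fin N → ℝ) → ℝ :=
  fun t => fderiv ℝ f t (Pi.single i 1)


variable {N : ℕ}

lemma pd_smooth (i : Fin N) {f : (Fin N → ℝ) → ℝ} (hf : ContDiff ℝ (⊤ : ℕ∞) f) :
    ContDiff ℝ (⊤ : ℕ∞) (pd i f) :=
  ((hf.fderiv_right (by simp)).clm_apply contDiff_const)

lemma pd_of_hasFDerivAt {i : Fin N} {f : (Fin N → ℝ) → ℝ} {f' : (Fin N → ℝ) →L[ℝ] ℝ}
    {t : Fin N → ℝ} (h : HasFDerivAt f f' t) : pd i f t = f' (Pi.single i 1) := by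
  simp [pd, h.fderiv]

lemma pd_comm (i j : Fin N) {f : (Fin N → ℝ) → ℝ} (hf : ContDiff ℝ (⊤ : ℕ∞) f) (t : Fin N → ℝ) :
    pd i (pd j f) t = pd j (pd i f) t := by
  have hd : Differentiable ℝ f := hf.differentiable (by simp)
  have h1 : ContDiff ℝ (⊤ : ℕ∞) (fderiv ℝ f) := hf.fderiv_right (by simp)
  have hdt : DifferentiableAt ℝ (fderiv ℝ f) t := (h1.differentiable (by simp)) t
  have key : ∀ v w : Fin N → ℝ,
      fderiv ℝ (fun s => fderiv ℝ f s v) t w = fderiv ℝ (fderiv ℝ f) t w v := by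
    intro v w
    have h2 : HasFDerivAt (fun s => fderiv ℝ f s v)
        ((ContinuousLinearMap.apply ℝ ℝ v).comp (fderiv ℝ (fderiv ℝ f) t)) t :=
      (ContinuousLinearMap.apply ℝ ℝ v).hasFDerivAt.comp t hdt.hasFDerivAt
    rw [h2.fderiv]; rfl
  have hsymm := second_derivative_symmetric (f := f) (f' := fderiv ℝ f)
    (fun y => (hd y).hasFDerivAt) hdt.hasFDerivAt
  show fderiv ℝ (fun s => fderiv ℝ f s (Pi.single j 1)) t (Pi.single i 1) =
    fderiv ℝ (fun s => fderiv ℝ f s (Pi.single i 1)) t (Pi.single j 1)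
  rw [key, key, hsymm]

lemma pd_sin {i : Fin N} {f : (Fin N → ℝ) → ℝ} {t : Fin N → ℝ}
    (hf : DifferentiableAt ℝ f t) :
    pd i (fun s => Real.sin (f s)) t = Real.cos (f t) * pd i f t := by
  have h : HasFDerivAt (fun s => Real.sin (f s)) (Real.cos (f t) • fderiv ℝ f t) t :=
    (Real.hasDerivAt_sin (f t)).comp_hasFDerivAt t hf.hasFDerivAt
  rw [pd_of_hasFDerivAt h]; simp [pd]

lemma pd_cos {i : Fin N} {f : (Fin N → ℝ) → ℝ} {t : Fin N → ℝ}
    (hf : DifferentiableAt ℝ f t) :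
    pd i (fun s => Real.cos (f s)) t = -Real.sin (f t) * pd i f t := by
  have h : HasFDerivAt (fun s => Real.cos (f s)) (-Real.sin (f t) • fderiv ℝ f t) t :=
    (Real.hasDerivAt_cos (f t)).comp_hasFDerivAt t hf.hasFDerivAt
  rw [pd_of_hasFDerivAt h]; simp [pd]

lemma pd_mul {i : Fin N} {f g : (Fin N → ℝ) → ℝ} {t : Fin N → ℝ}
    (hf : DifferentiableAt ℝ f t) (hg : DifferentiableAt ℝ g t) :
    pd i (fun s => f s * g s) t = pd i f t * g t + f t * pd i g t := by
  have h := hf.hasFDerivAt.mul hg.hasFDerivAt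
  rw [pd_of_hasFDerivAt (f := fun s => f s * g s) h]; simp [pd]; ring

lemma pd_rhs {i : Fin N} {f g : (Fin N → ℝ) → ℝ} {t : Fin N → ℝ}
    (hf : DifferentiableAt ℝ f t) (hg : DifferentiableAt ℝ g t) :
    pd i (fun s => f s + (1 / 2) * (g s) ^ 3) t
      = pd i f t + (3 / 2) * (g t) ^ 2 * pd i g t := by
  have hp : HasFDerivAt (fun s => (g s) ^ 3) ((3 * g t ^ 2 : ℝ) • fderiv ℝ g t) t := by
    have := (hasDerivAt_pow 3 (g t)).comp_hasFDerivAt t hg.hasFDerivAt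
    norm_num at this ⊢
    exact this
  have h := hf.hasFDerivAt.add (hp.const_mul (1/2 : ℝ))
  rw [pd_of_hasFDerivAt (f := fun s => f s + (1 / 2) * (g s) ^ 3) h]; simp [pd]; ring

/-- if smooth `u : ℝ³ → ℝ` (coordinates `x = 0`, `y = 1`, `z = 2`) satisfies
the sine-Gordon equation `u_xy = sin u` and the modified KdV equation
`u_z = u_xxx + ½u_x³` everywhere, then it also satisfies the remaining multi-time
Euler–Lagrange equations `u_xz = (3/2)u_x²u_xx + u_xxxx`,
`u_yz = ½u_x²·sin u + u_xx·cos u` and `u_xxy = u_x·cos u` everywhere. -/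
theorem stmt_6 (u : (Fin 3 → ℝ) → ℝ) (hu : ContDiff ℝ (⊤ : ℕ∞) u)
    (hSG : ∀ t : Fin 3 → ℝ, pd 1 (pd 0 u) t = Real.sin (u t))
    (hmKdV : ∀ t : Fin 3 → ℝ,
      pd 2 u t = pd 0 (pd 0 (pd 0 u)) t + (1 / 2) * (pd 0 u t) ^ 3) :
    ∀ t : Fin 3 → ℝ,
      pd 2 (pd 0 u) t
          = (3 / 2) * (pd 0 u t) ^ 2 * pd 0 (pd 0 u) t + pd 0 (pd 0 (pd 0 (pd 0 u))) t ∧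
      pd 2 (pd 1 u) t
          = (1 / 2) * (pd 0 u t) ^ 2 * Real.sin (u t)
            + pd 0 (pd 0 u) t * Real.cos (u t) ∧
      pd 1 (pd 0 (pd 0 u)) t = pd 0 u t * Real.cos (u t) := by
  have h0 : ContDiff ℝ (⊤ : ℕ∞) (pd 0 u) := pd_smooth _ hu
  have h00 : ContDiff ℝ (⊤ : ℕ∞) (pd 0 (pd 0 u)) := pd_smooth _ h0
  have h000 : ContDiff ℝ (⊤ : ℕ∞) (pd 0 (pd 0 (pd 0 u))) := pd_smooth _ h00
  have hud : Differentiable ℝ u := hu.differentiable (by simp)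
  have hSGf : pd 1 (pd 0 u) = fun s => Real.sin (u s) := funext hSG
  have hmf : pd 2 u = fun s => pd 0 (pd 0 (pd 0 u)) s + (1 / 2) * (pd 0 u s) ^ 3 :=
    funext hmKdV
  have key3 : ∀ s, pd 1 (pd 0 (pd 0 u)) s = Real.cos (u s) * pd 0 u s := by
    intro s
    rw [pd_comm 1 0 h0 s, hSGf, pd_sin (hud s)]
  intro t
  refine ⟨?_, ?_, ?_⟩
  · rw [pd_comm 2 0 hu t, hmf,
      pd_rhs (h000.differentiable (by simp) t) (h0.differentiable (by simp) t)]
    ring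
  · rw [pd_comm 2 1 hu t, hmf,
      pd_rhs (h000.differentiable (by simp) t) (h0.differentiable (by simp) t),
      hSG t, pd_comm 1 0 h00 t, funext key3,
      pd_mul ((hud t).cos) (h0.differentiable (by simp) t),
      pd_cos (hud t)]
    ring
  · rw [key3 t]; ring
end
end

section
/- Fix distinct i, j ∈ {2, …, N}. Let h_i, h_j ∈ 𝓡 depend only on the variables v_{x^α} with α ≥ 1; set g_i := δh_i/δv_x, g_j := δh_j/δv_x, a_{ij} := Σ_{α≥0} v_{x^α t_j}·(δh_i/δv_{x^{α+1}}), a_{ji} := Σ_{α≥0} v_{x^α t_i}·(δh_j/δv_{x^{α+1}}), and suppose b_{ij}, b_{ji} ∈ 𝓡 satisfy D_x(b_{ij}) = D_x(g_i)·g_j and D_x(b_{ji}) = D_x(g_j)·g_i. Define L_{1i} := (1/2)v_x v_{t_i} − h_i, L_{1j} := (1/2)v_x v_{t_j} − h_j, and L_{ij} := (1/2)(v_{t_i}·g_j − v_{t_j}·g_i) + (a_{ij} − a_{ji}) − (1/2)(b_{ij} − b_{ji}). Then the exterior-derivative coefficient satisfies the identity D_j(L_{1i}) − D_i(L_{1j})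 + D_x(L_{ij}) = (1/2)(v_{t_i} − g_i)·D_x(v_{t_j} − g_j) − (1/2)(v_{t_j} − g_j)·D_x(v_{t_i} − g_i) in 𝓡. In particular this coefficient vanishes under substitution of either of the evolution equations v_{t_i} = g_i or v_{t_j} = g_j (together with its x-differentiated consequences). -/
open MvPolynomial

noncomputable section

/-- The ring `𝓡` of differential polynomials of a field `v` in independent variables
`t_1, …, t_N`: the polynomial ring over `ℝ` in commuting variables `v_I` indexed by
multi-indices `I : Fin N → ℕ`. -/
abbrev DiffPoly (N : ℕ) := MvPolynomial (Fin N → ℕ) ℝ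

/-- The total derivative `D_m`, determined by `D_m (v_I) = v_{I + e_m}`. -/
noncomputable def totalDeriv {N : ℕ} (m : Fin N) :
    Derivation ℝ (DiffPoly N) (DiffPoly N) :=
  MvPolynomial.mkDerivation ℝ fun I => X (I + Pi.single m 1)

/-- The x-variational derivative `δf/δv_I = Σ_α (−1)^α D_x^α (∂f/∂v_{I+α·e_x})`,
where `x` is the coordinate direction playing the role of `t_1`. -/
noncomputable def varDeriv {N : ℕ} (x : Fin N) (I : Fin N → ℕ) (f : DiffPoly N) :
    DiffPoly N :=
  ∑ᶠ α : ℕ, (-1 : ℝ) ^ α • (fun p => totalDeriv x p)^[α] (pderiv (I + α • Pi.single x 1) f)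

/-- The (m,l)-variational derivative
`δ_{ml}f/δv_I = Σ_{α,β} (−1)^{α+β} D_m^α D_l^β (∂f/∂v_{I+α·e_m+β·e_l})`. -/
noncomputable def varDeriv2 {N : ℕ} (m l : Fin N) (I : Fin N → ℕ) (f : DiffPoly N) :
    DiffPoly N :=
  ∑ᶠ α : ℕ, ∑ᶠ β : ℕ, (-1 : ℝ) ^ (α + β) •
    (fun p => totalDeriv m p)^[α] ((fun p => totalDeriv l p)^[β]
      (pderiv (I + α • Pi.single m 1 + β • Pi.single l 1) f))

/-- `g := δh/δv_x`, the variational derivative with respect to `v_x`. -/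
noncomputable def gOf {N : ℕ} (x : Fin N) (h : DiffPoly N) : DiffPoly N :=
  varDeriv x (Pi.single x 1) h

/-- `a_{··} := Σ_α v_{x^α t_m} · (δh/δv_{x^{α+1}})`. -/
noncomputable def aOf {N : ℕ} (x m : Fin N) (h : DiffPoly N) : DiffPoly N :=
  ∑ᶠ α : ℕ, X (α • Pi.single x 1 + Pi.single m 1) * varDeriv x ((α + 1) • Pi.single x 1) h

/-!
Write `E_β := δh/δv_{x^β}`, so that `E_β = ∂h/∂v_{x^β} - D_x E_{β+1}` and `g = E_1`. Since
`D_x v_{x^α t_m} = v_{x^{α+1} t_m}`, summation by parts gives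
`D_x a = Σ_α v_{x^α t_m} ∂h/∂v_{x^α} - v_{t_m} E_0`. When `h` involves only the `v_{x^α}` with
`α ≥ 1`, the sum is the chain rule for `D_m h`, and `E_0 = -D_x g` because `∂h/∂v = 0`. Hence
`D_x a_{ij} = D_j h_i + v_{t_j} D_x g_i`; together with the defining equations of `b_{ij}`, `b_{ji}`
this reduces the claim to a polynomial identity.
-/

section EulerSum

variable {R A : Type*} [CommRing R] [CommRing A] [Algebra R A] (D : Derivation R A A)

def eulerSum (p : ℕ → A) (β : ℕ) : A :=
  ∑ᶠ α : ℕ, (-1 : R) ^ α • (⇑D)^[α] (p (β + α))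

variable {D} {p : ℕ → A} {n : ℕ}

theorem eulerSum_eq_sum_range (hp : ∀ k, n ≤ k → p k = 0) {β m : ℕ} (hm : n ≤ β + m) :
    eulerSum D p β = ∑ α ∈ Finset.range m, (-1 : R) ^ α • (⇑D)^[α] (p (β + α)) := by
  refine finsum_eq_sum_of_support_subset _ fun α hα => ?_
  by_contra hαm
  simp only [Finset.coe_range, Set.mem_Iio, not_lt] at hαm
  exact hα (by dsimp only; rw [hp _ (by omega), Function.iterate_fixed (map_zero D), smul_zero])

theorem eulerSum_eq_zero (hp : ∀ k, n ≤ k → p k = 0) {β : ℕ} (hβ : n ≤ β) :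
    eulerSum D p β = 0 := by
  simp [eulerSum_eq_sum_range hp (m := 0) hβ]

theorem eulerSum_eq_sub (hp : ∀ k, n ≤ k → p k = 0) (β : ℕ) :
    eulerSum D p β = p β - D (eulerSum D p (β + 1)) := by
  rw [eulerSum_eq_sum_range hp (m := n + 1) (by omega),
    eulerSum_eq_sum_range hp (m := n) (by omega), Finset.sum_range_succ', map_sum]
  simp only [pow_succ, mul_neg_one, neg_smul, Function.iterate_succ_apply', Derivation.map_smul,
    Finset.sum_neg_distrib, add_assoc, add_comm 1, pow_zero, one_smul, Function.iterate_zero_apply,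
    add_zero]
  abel

theorem derivation_finsum_mul_eulerSum (hp : ∀ k, n ≤ k → p k = 0) {u : ℕ → A}
    (hu : ∀ α, D (u α) = u (α + 1)) :
    D (∑ᶠ α, u α * eulerSum D p (α + 1)) = ∑ᶠ α, u α * p α - u 0 * eulerSum D p 0 := by
  have hE : ∀ α, n ≤ α → u α * eulerSum D p (α + 1) = 0 := fun α hα => by
    rw [eulerSum_eq_zero hp (by omega), mul_zero]
  have hup : ∀ α, n ≤ α → u α * p α = 0 := fun α hα => by rw [hp α hα, mul_zero]
  rw [finsum_eq_sum_of_support_subset (s := Finset.range n) _ fun α hα => ?_,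
    finsum_eq_sum_of_support_subset (s := Finset.range n) _ fun α hα => ?_]
  · have hstep : ∀ α, D (u α * eulerSum D p (α + 1))
        = (u (α + 1) * eulerSum D p (α + 1) - u α * eulerSum D p α) + u α * p α := by
      intro α
      rw [Derivation.leibniz, smul_eq_mul, smul_eq_mul, hu, eulerSum_eq_sub hp α]
      ring
    rw [map_sum, Finset.sum_congr rfl fun α _ => hstep α, Finset.sum_add_distrib,
      Finset.sum_range_sub (fun α => u α * eulerSum D p α), eulerSum_eq_zero hp le_rfl]
    ring
  all_goals
    by_contra hαn
    simp only [Finset.coe_range, Set.mem_Iio, not_lt] at hαn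
    first | exact hα (hup α hαn) | exact hα (hE α hαn)

end EulerSum

namespace MvPolynomial

variable {σ R : Type*} [CommSemiring R]

theorem derivation_eq_sum_pderiv (D : Derivation R (MvPolynomial σ R) (MvPolynomial σ R))
    (f : MvPolynomial σ R) : D f = ∑ i ∈ f.vars, pderiv i f * D (X i) := by
  classical
  let D' : Derivation R (MvPolynomial σ R) (MvPolynomial σ R) :=
    ∑ i ∈ f.vars, D (X i) • pderiv i
  have hD' : ∀ g, D' g = ∑ i ∈ f.vars, pderiv i g * D (X i) := fun g => by
    rw [← Derivation.coeFnAddMonoidHom_apply D', map_sum, Finset.sum_apply]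
    simp only [Derivation.coeFnAddMonoidHom_apply, Derivation.smul_apply, smul_eq_mul, mul_comm]
  refine (derivation_eq_of_forall_mem_vars (D₂ := D') fun k hk => ?_).trans (hD' f)
  simp [hD', pderiv_X, Pi.single_apply, hk]

end MvPolynomial

section DiffPoly

variable {N : ℕ}

theorem totalDeriv_X (m : Fin N) (I : Fin N → ℕ) :
    totalDeriv m (X I : DiffPoly N) = X (I + Pi.single m 1) :=
  mkDerivation_X _ _ _

theorem exists_forall_pderiv_nsmul_single_eq_zero (x : Fin N) (H : DiffPoly N) :
    ∃ n : ℕ, ∀ k, n ≤ k → pderiv (k • Pi.single x 1) H = 0 := by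
  refine ⟨(H.vars.sup fun I => I x) + 1, fun k hk => pderiv_eq_zero_of_notMem_vars fun hmem => ?_⟩
  have := Finset.le_sup (f := fun I : Fin N → ℕ => I x) hmem
  simp only [Pi.smul_apply, Pi.single_eq_same, smul_eq_mul, mul_one] at this
  omega

theorem varDeriv_nsmul_single (x : Fin N) (β : ℕ) (H : DiffPoly N) :
    varDeriv x (β • Pi.single x 1) H
      = eulerSum (totalDeriv x) (fun k => pderiv (k • Pi.single x 1) H) β :=
  finsum_congr fun α => by rw [← add_smul]

theorem totalDeriv_eq_finsum_pderiv (x m : Fin N) {H : DiffPoly N}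
    (hH : (H.vars : Set (Fin N → ℕ)) ⊆ Set.range fun α : ℕ => α • Pi.single x 1) :
    totalDeriv m H
      = ∑ᶠ α : ℕ, X (α • Pi.single x 1 + Pi.single m 1) * pderiv (α • Pi.single x 1) H := by
  have hinj : Function.Injective fun α : ℕ => (α • Pi.single x 1 : Fin N → ℕ) :=
    fun α γ h => by simpa using congrFun h x
  rw [derivation_eq_sum_pderiv, ← Finset.sum_preimage _ H.vars hinj.injOn
      (fun I => pderiv I H * totalDeriv m (X I)) fun I hI hIr => absurd (hH hI) hIr,
    finsum_eq_sum_of_support_subset (s := H.vars.preimage _ hinj.injOn) _ fun α hα => ?_]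
  · exact Finset.sum_congr rfl fun α _ => by rw [totalDeriv_X, mul_comm]
  simp only [Finset.coe_preimage, Set.mem_preimage, Finset.mem_coe]
  by_contra hα'
  exact hα (by dsimp only; rw [pderiv_eq_zero_of_notMem_vars hα', mul_zero])

theorem vars_subset_of_mem_adjoin {x : Fin N} {H : DiffPoly N}
    (hH : H ∈ Algebra.adjoin ℝ
      {p : DiffPoly N | ∃ α : ℕ, 1 ≤ α ∧ p = X (α • Pi.single x 1)}) :
    (H.vars : Set (Fin N → ℕ)) ⊆ {I | ∃ α : ℕ, 1 ≤ α ∧ I = α • Pi.single x 1} := by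
  have hset : {p : DiffPoly N | ∃ α : ℕ, 1 ≤ α ∧ p = X (α • Pi.single x 1)}
      = X '' {I | ∃ α : ℕ, 1 ≤ α ∧ I = α • Pi.single x 1} := by
    ext p
    constructor
    · rintro ⟨α, hα, rfl⟩
      exact ⟨_, ⟨α, hα, rfl⟩, rfl⟩
    · rintro ⟨_, ⟨α, hα, rfl⟩, rfl⟩
      exact ⟨α, hα, rfl⟩
  rw [hset, ← supported_eq_adjoin_X, mem_supported] at hH
  exact hH

theorem totalDeriv_aOf (x m : Fin N) {H : DiffPoly N}
    (hH : (H.vars : Set (Fin N → ℕ)) ⊆ {I | ∃ α : ℕ, 1 ≤ α ∧ I = α • Pi.single x 1}) :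
    totalDeriv x (aOf x m H) = totalDeriv m H + X (Pi.single m 1) * totalDeriv x (gOf x H) := by
  obtain ⟨n, hn⟩ := exists_forall_pderiv_nsmul_single_eq_zero x H
  have hshift : ∀ α : ℕ, totalDeriv x (X (α • Pi.single x 1 + Pi.single m 1) : DiffPoly N)
      = X ((α + 1) • Pi.single x 1 + Pi.single m 1) := fun α => by
    rw [totalDeriv_X, succ_nsmul, add_right_comm]
  have haOf : aOf x m H = ∑ᶠ α : ℕ, X (α • Pi.single x 1 + Pi.single m 1)
      * eulerSum (totalDeriv x) (fun k => pderiv (k • Pi.single x 1) H) (α + 1) :=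
    finsum_congr fun α => by rw [varDeriv_nsmul_single]
  have hgOf : gOf x H = eulerSum (totalDeriv x) (fun k => pderiv (k • Pi.single x 1) H) 1 := by
    rw [gOf, ← varDeriv_nsmul_single, one_smul]
  have hpderiv_zero : pderiv ((0 : ℕ) • Pi.single x 1) H = 0 :=
    pderiv_eq_zero_of_notMem_vars fun h0 => by
      obtain ⟨α, hα, h⟩ := hH h0
      have h0x := congrFun h x
      simp only [Pi.smul_apply, Pi.single_eq_same, smul_eq_mul, mul_one] at h0x
      omega
  have hrange : (H.vars : Set (Fin N → ℕ)) ⊆ Set.range fun α : ℕ => α • Pi.single x 1 :=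
    fun I hI => by
      obtain ⟨α, -, rfl⟩ := hH hI
      exact ⟨α, rfl⟩
  rw [haOf, derivation_finsum_mul_eulerSum hn hshift, eulerSum_eq_sub hn 0, hpderiv_zero,
    ← totalDeriv_eq_finsum_pderiv x m hrange, hgOf, zero_smul, zero_add, zero_add]
  ring

end DiffPoly

/-- with `L_{1i} = ½ v_x v_{t_i} − h_i`, `L_{1j} = ½ v_x v_{t_j} − h_j` and
`L_{ij} = ½(v_{t_i}g_j − v_{t_j}g_i) + (a_{ij} − a_{ji}) − ½(b_{ij} − b_{ji})`, one has
`D_j(L_{1i}) − D_i(L_{1j}) + D_x(L_{ij})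
  = ½(v_{t_i} − g_i)·D_x(v_{t_j} − g_j) − ½(v_{t_j} − g_j)·D_x(v_{t_i} − g_i)`. -/
theorem stmt_15 (N : ℕ) (x : Fin N)
    (i j : Fin N)
    (Hi Hj : DiffPoly N)
    (hdepi : Hi ∈ Algebra.adjoin ℝ
      {p : DiffPoly N | ∃ α : ℕ, 1 ≤ α ∧ p = X (α • Pi.single x 1)})
    (hdepj : Hj ∈ Algebra.adjoin ℝ
      {p : DiffPoly N | ∃ α : ℕ, 1 ≤ α ∧ p = X (α • Pi.single x 1)})
    (bij bji : DiffPoly N)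
    (hbij : totalDeriv x bij = totalDeriv x (gOf x Hi) * gOf x Hj)
    (hbji : totalDeriv x bji = totalDeriv x (gOf x Hj) * gOf x Hi) :
    totalDeriv j ((1 / 2 : ℝ) • (X (Pi.single x 1) * X (Pi.single i 1)) - Hi)
      - totalDeriv i ((1 / 2 : ℝ) • (X (Pi.single x 1) * X (Pi.single j 1)) - Hj)
      + totalDeriv x ((1 / 2 : ℝ) •
            (X (Pi.single i 1) * gOf x Hj - X (Pi.single j 1) * gOf x Hi)
          + (aOf x j Hi - aOf x i Hj) - (1 / 2 : ℝ) • (bij - bji))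
    = (1 / 2 : ℝ) • ((X (Pi.single i 1) - gOf x Hi)
          * totalDeriv x (X (Pi.single j 1) - gOf x Hj))
      - (1 / 2 : ℝ) • ((X (Pi.single j 1) - gOf x Hj)
          * totalDeriv x (X (Pi.single i 1) - gOf x Hi)) := by
  simp only [map_sub, map_add, Derivation.leibniz, smul_eq_mul, derivation_C, totalDeriv_X,
    totalDeriv_aOf x _ (vars_subset_of_mem_adjoin hdepi),
    totalDeriv_aOf x _ (vars_subset_of_mem_adjoin hdepj), hbij, hbji, smul_eq_C_mul]
  have hhalf : (C (1 / 2 : ℝ) : DiffPoly N) + C (1 / 2) = 1 := by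
    rw [← C_add]
    norm_num
  -- mixed derivatives such as `v_{x t_i}` occur with both orders of the multi-index sum
  rw [add_comm (Pi.single x 1) (Pi.single i 1), add_comm (Pi.single x 1) (Pi.single j 1),
    add_comm (Pi.single j 1) (Pi.single i 1)]
  linear_combination (X (Pi.single i 1) * totalDeriv x (gOf x Hj)
    - X (Pi.single j 1) * totalDeriv x (gOf x Hi)) * hhalf
end
end
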